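/- arXiv:1404.2974 — 2 statements merged into one kernel-verified Lean document; each statement's English description precedes it below -/
import Mathlib

section
/- Let (X, dist) be a metric space, ψ : X → ℝ a Lipschitz function with constant L, and f : X → ℝ a function with |f| ≤ M everywhere. Let ε > 0 and N₁, N₂ ≥ 0, and suppose that |f(z) − f(z')| ≤ N₁·dist(z,z') whenever ψ(z) ≥ ε and ψ(z') ≥ ε, and |f(z) − f(z')| ≤ N₂·dist(z,z') whenever ψ(z) ≤ 2ε and ψ(z') ≤ 2ε. Then f is Lipschitz on X with constant max(N₁, N₂, 2ML/ε). -/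
/-- Gluing lemma: if `ψ : X → ℝ` is Lipschitz with constant `L`, `|f| ≤ M`,
`f` is `N₁`-Lipschitz on `{ψ ≥ ε}` and `N₂`-Lipschitz on `{ψ ≤ 2ε}`, then `f` is
Lipschitz on `X` with constant `max (N₁, N₂, 2ML/ε)`. -/
theorem stmt_11 {X : Type*} [MetricSpace X] (ψ f : X → ℝ) (L M ε N₁ N₂ : ℝ)
    (hL : 0 ≤ L) (hψ : ∀ z z' : X, |ψ z - ψ z'| ≤ L * dist z z')
    (hM : ∀ z : X, |f z| ≤ M) (hε : 0 < ε) (hN₁ : 0 ≤ N₁) (hN₂ : 0 ≤ N₂)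
    (h₁ : ∀ z z' : X, ε ≤ ψ z → ε ≤ ψ z' → |f z - f z'| ≤ N₁ * dist z z')
    (h₂ : ∀ z z' : X, ψ z ≤ 2 * ε → ψ z' ≤ 2 * ε → |f z - f z'| ≤ N₂ * dist z z') :
    ∀ z z' : X, |f z - f z'| ≤ max (max N₁ N₂) (2 * M * L / ε) * dist z z' := by
  -- mixed case helper
  have key : ∀ z z' : X, 2 * ε < ψ z → ψ z' < ε →
      |f z - f z'| ≤ max (max N₁ N₂) (2 * M * L / ε) * dist z z' := by
    intro z z' hz hz'
    have hM0 : 0 ≤ M := le_trans (abs_nonneg _) (hM z)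
    have hgap : ε < ψ z - ψ z' := by nlinarith
    have hdist : ε < L * dist z z' :=
      lt_of_lt_of_le hgap (le_trans (le_abs_self _) (hψ z z'))
    have hLpos : 0 < L := by
      by_contra h
      push_neg at h
      nlinarith [dist_nonneg (x := z) (y := z'), mul_nonpos_of_nonpos_of_nonneg h
        (dist_nonneg (x := z) (y := z'))]
    have hd : ε / L < dist z z' := (div_lt_iff₀' hLpos).mpr hdist
    have hfb : |f z - f z'| ≤ 2 * M :=
      le_trans (abs_sub _ _) (by linarith [hM z, hM z'])
    have h2M : 2 * M ≤ 2 * M * L / ε * dist z z' := by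
      rw [div_mul_eq_mul_div, le_div_iff₀ hε]
      nlinarith
    refine le_trans hfb (le_trans h2M ?_)
    apply mul_le_mul_of_nonneg_right (le_max_right _ _) dist_nonneg
  intro z z'
  have habs : ∀ a b : X, |f a - f b| = |f b - f a| := fun a b => abs_sub_comm _ _
  rcases le_or_gt (ψ z) (2 * ε) with h1 | h1 <;> rcases le_or_gt (ψ z') (2 * ε) with h2 | h2
  · exact le_trans (h₂ z z' h1 h2)
      (mul_le_mul_of_nonneg_right (le_trans (le_max_right _ _) (le_max_left _ _)) dist_nonneg)
  · rcases le_or_gt ε (ψ z) with h3 | h3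
    · exact le_trans (h₁ z z' h3 (by linarith))
        (mul_le_mul_of_nonneg_right (le_trans (le_max_left _ _) (le_max_left _ _)) dist_nonneg)
    · rw [habs, dist_comm]
      exact key z' z h2 h3
  · rcases le_or_gt ε (ψ z') with h3 | h3
    · exact le_trans (h₁ z z' (by linarith) h3)
        (mul_le_mul_of_nonneg_right (le_trans (le_max_left _ _) (le_max_left _ _)) dist_nonneg)
    · exact key z z' h1 h3
  · exact le_trans (h₁ z z' (by linarith) (by linarith))
      (mul_le_mul_of_nonneg_right (le_trans (le_max_left _ _) (le_max_left _ _)) dist_nonneg)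
end

section
/- Let δ₁ > 0 and K₀ ≥ 0, and let f, f̃, c, c̃ : [0,∞) → ℝ be measurable functions with |f(t)| ≤ K₀, |f̃(t)| ≤ K₀, c(t) ≥ δ₁ and c̃(t) ≥ δ₁ for all t, with c, c̃ locally integrable. Set φ(t) = ∫₀^t c(s)ds and φ̃(t) = ∫₀^t c̃(s)ds. Then |∫₀^∞ f(t)e^{−φ(t)}dt − ∫₀^∞ f̃(t)e^{−φ̃(t)}dt| ≤ ∫₀^∞ [ |f(t) − f̃(t)|·e^{−δ₁t} + K₀·e^{−δ₁t}·∫₀^t |c(s) − c̃(s)|ds ] dt. -/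
open MeasureTheory

lemma aux_exp_lip (a b : ℝ) :
    |Real.exp (-a) - Real.exp (-b)| ≤ Real.exp (-min a b) * |a - b| := by
  wlog h : a ≤ b generalizing a b
  · have := this b a (le_of_not_ge h)
    rwa [abs_sub_comm, min_comm, abs_sub_comm b a] at this
  have h1 : Real.exp (-b) ≤ Real.exp (-a) := Real.exp_le_exp.2 (by linarith)
  rw [min_eq_left h, abs_of_nonneg (by linarith), abs_of_nonpos (by linarith)]
  have h2 : (a - b) + 1 ≤ Real.exp (a - b) := Real.add_one_le_exp _
  have h3 : Real.exp (-b) = Real.exp (-a) * Real.exp (a - b) := by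
    rw [← Real.exp_add]; ring_nf
  nlinarith [Real.exp_pos (-a)]

lemma aux_cont {c : ℝ → ℝ} (hcl : LocallyIntegrableOn c (Set.Ici (0:ℝ))) :
    ContinuousOn (fun x => ∫ s in (0:ℝ)..x, c s) (Set.Ici (0:ℝ)) := by
  intro x₀ hx₀
  have hx₀' : (0:ℝ) ≤ x₀ := hx₀
  have hint : IntegrableOn c (Set.Icc 0 (x₀ + 1)) :=
    hcl.integrableOn_compact_subset Set.Icc_subset_Ici_self isCompact_Icc
  have hcont :
      ContinuousOn (fun x => ∫ s in Set.Ioc (0:ℝ) x, c s) (Set.Icc 0 (x₀ + 1)) :=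
    intervalIntegral.continuousOn_primitive hint
  have heq : Set.EqOn (fun x => ∫ s in (0:ℝ)..x, c s)
      (fun x => ∫ s in Set.Ioc (0:ℝ) x, c s) (Set.Icc 0 (x₀ + 1)) :=
    fun x hx => intervalIntegral.integral_of_le hx.1
  have hmem : x₀ ∈ Set.Icc (0:ℝ) (x₀ + 1) := ⟨hx₀', by linarith⟩
  have hCWA := ((hcont.congr heq).continuousWithinAt hmem)
  refine hCWA.mono_of_mem_nhdsWithin ?_
  rw [← Set.Ici_inter_Iic]
  exact Filter.inter_mem self_mem_nhdsWithin
    (mem_nhdsWithin_of_mem_nhds (Iic_mem_nhds (lt_add_one x₀)))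

/-- If `|f|, |f̃| ≤ K₀`, `c, c̃ ≥ δ₁ > 0` on `[0,∞)`, `c, c̃` are locally integrable
there, and `φ(t) = ∫₀ᵗ c`, `φ̃(t) = ∫₀ᵗ c̃`, then
`|∫₀^∞ f e^{−φ} − ∫₀^∞ f̃ e^{−φ̃}|
  ≤ ∫₀^∞ [ |f−f̃| e^{−δ₁ t} + K₀ e^{−δ₁ t} ∫₀ᵗ |c−c̃| ] dt`
(the right-hand side being a Lebesgue integral, possibly infinite). -/
theorem stmt_12 (δ₁ K₀ : ℝ) (hδ₁ : 0 < δ₁) (hK₀ : 0 ≤ K₀)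
    (f ftilde c ctilde : ℝ → ℝ)
    (hfm : Measurable f) (hftm : Measurable ftilde)
    (hcm : Measurable c) (hctm : Measurable ctilde)
    (hf : ∀ t : ℝ, 0 ≤ t → |f t| ≤ K₀) (hft : ∀ t : ℝ, 0 ≤ t → |ftilde t| ≤ K₀)
    (hc : ∀ t : ℝ, 0 ≤ t → δ₁ ≤ c t) (hct : ∀ t : ℝ, 0 ≤ t → δ₁ ≤ ctilde t)
    (hcl : LocallyIntegrableOn c (Set.Ici (0:ℝ)))
    (hctl : LocallyIntegrableOn ctilde (Set.Ici (0:ℝ)))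
    (φ φtilde : ℝ → ℝ)
    (hφ : ∀ t : ℝ, φ t = ∫ s in (0:ℝ)..t, c s)
    (hφt : ∀ t : ℝ, φtilde t = ∫ s in (0:ℝ)..t, ctilde s) :
    ENNReal.ofReal
        |(∫ t in Set.Ioi (0:ℝ), f t * Real.exp (-φ t)) -
          ∫ t in Set.Ioi (0:ℝ), ftilde t * Real.exp (-φtilde t)| ≤
      ∫⁻ t in Set.Ioi (0:ℝ),
        ENNReal.ofReal
          (|f t - ftilde t| * Real.exp (-(δ₁ * t)) +
            K₀ * Real.exp (-(δ₁ * t)) * ∫ s in (0:ℝ)..t, |c s - ctilde s|) := by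
  set g : ℝ → ℝ := fun t => f t * Real.exp (-φ t) with hg_def
  set gt : ℝ → ℝ := fun t => ftilde t * Real.exp (-φtilde t) with hgt_def
  -- interval integrability
  have hci : ∀ t : ℝ, 0 ≤ t → IntervalIntegrable c volume 0 t := by
    intro t ht
    have : IntegrableOn c (Set.Icc 0 t) :=
      hcl.integrableOn_compact_subset Set.Icc_subset_Ici_self isCompact_Icc
    exact MeasureTheory.IntegrableOn.intervalIntegrable (by rwa [Set.uIcc_of_le ht])
  have hcti : ∀ t : ℝ, 0 ≤ t → IntervalIntegrable ctilde volume 0 t := by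
    intro t ht
    have : IntegrableOn ctilde (Set.Icc 0 t) :=
      hctl.integrableOn_compact_subset Set.Icc_subset_Ici_self isCompact_Icc
    exact MeasureTheory.IntegrableOn.intervalIntegrable (by rwa [Set.uIcc_of_le ht])
  -- lower bounds
  have hφge : ∀ t : ℝ, 0 ≤ t → δ₁ * t ≤ φ t := by
    intro t ht
    rw [hφ t]
    have : ∫ s in (0:ℝ)..t, δ₁ ≤ ∫ s in (0:ℝ)..t, c s :=
      intervalIntegral.integral_mono_on ht intervalIntegrable_const (hci t ht)
        (fun x hx => hc x hx.1)
    simpa [mul_comm] using this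
  have hφtge : ∀ t : ℝ, 0 ≤ t → δ₁ * t ≤ φtilde t := by
    intro t ht
    rw [hφt t]
    have : ∫ s in (0:ℝ)..t, δ₁ ≤ ∫ s in (0:ℝ)..t, ctilde s :=
      intervalIntegral.integral_mono_on ht intervalIntegrable_const (hcti t ht)
        (fun x hx => hct x hx.1)
    simpa [mul_comm] using this
  -- difference of primitives
  have hφdiff : ∀ t : ℝ, 0 ≤ t →
      |φ t - φtilde t| ≤ ∫ s in (0:ℝ)..t, |c s - ctilde s| := by
    intro t ht
    have h1 : φ t - φtilde t = ∫ s in (0:ℝ)..t, (c s - ctilde s) := by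
      rw [hφ t, hφt t, intervalIntegral.integral_sub (hci t ht) (hcti t ht)]
    rw [h1]
    exact intervalIntegral.abs_integral_le_integral_abs ht
  -- measurability of φ, φtilde on Ioi 0
  have hφfun : φ = fun x => ∫ s in (0:ℝ)..x, c s := funext hφ
  have hφtfun : φtilde = fun x => ∫ s in (0:ℝ)..x, ctilde s := funext hφt
  have hφcont : ContinuousOn φ (Set.Ici (0:ℝ)) := hφfun ▸ aux_cont hcl
  have hφtcont : ContinuousOn φtilde (Set.Ici (0:ℝ)) := hφtfun ▸ aux_cont hctl
  have hφae : AEMeasurable φ (volume.restrict (Set.Ioi (0:ℝ))) :=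
    ((hφcont.mono Set.Ioi_subset_Ici_self).aemeasurable measurableSet_Ioi)
  have hφtae : AEMeasurable φtilde (volume.restrict (Set.Ioi (0:ℝ))) :=
    ((hφtcont.mono Set.Ioi_subset_Ici_self).aemeasurable measurableSet_Ioi)
  have hgmeas : AEStronglyMeasurable g (volume.restrict (Set.Ioi (0:ℝ))) :=
    hfm.aestronglyMeasurable.mul
      ((Real.continuous_exp.comp continuous_neg).measurable.comp_aemeasurable hφae).aestronglyMeasurable
  have hgtmeas : AEStronglyMeasurable gt (volume.restrict (Set.Ioi (0:ℝ))) :=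
    hftm.aestronglyMeasurable.mul
      ((Real.continuous_exp.comp continuous_neg).measurable.comp_aemeasurable hφtae).aestronglyMeasurable
  -- integrability of g, gt
  have hdom : Integrable (fun x : ℝ => K₀ * Real.exp (-δ₁ * x))
      (volume.restrict (Set.Ioi (0:ℝ))) :=
    (exp_neg_integrableOn_Ioi 0 hδ₁).const_mul K₀
  have hbound : ∀ (F Φ : ℝ → ℝ), (∀ t : ℝ, 0 ≤ t → |F t| ≤ K₀) →
      (∀ t : ℝ, 0 ≤ t → δ₁ * t ≤ Φ t) →
      ∀ᵐ t ∂volume.restrict (Set.Ioi (0:ℝ)),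
        ‖F t * Real.exp (-Φ t)‖ ≤ K₀ * Real.exp (-δ₁ * t) := by
    intro F Φ hF hΦ
    refine (ae_restrict_iff' measurableSet_Ioi).2 (Filter.Eventually.of_forall ?_)
    intro t ht
    have ht' : (0:ℝ) ≤ t := le_of_lt ht
    have h1 : Real.exp (-Φ t) ≤ Real.exp (-δ₁ * t) := by
      apply Real.exp_le_exp.2; have := hΦ t ht'; linarith
    calc ‖F t * Real.exp (-Φ t)‖ = |F t| * Real.exp (-Φ t) := by
          rw [Real.norm_eq_abs, abs_mul, abs_of_pos (Real.exp_pos _)]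
      _ ≤ K₀ * Real.exp (-δ₁ * t) :=
          mul_le_mul (hF t ht') h1 (Real.exp_pos _).le hK₀
  have hgint : Integrable g (volume.restrict (Set.Ioi (0:ℝ))) :=
    Integrable.mono' hdom hgmeas (hbound f φ hf hφge)
  have hgtint : Integrable gt (volume.restrict (Set.Ioi (0:ℝ))) :=
    Integrable.mono' hdom hgtmeas (hbound ftilde φtilde hft hφtge)
  -- pointwise estimate
  have hpt : ∀ t : ℝ, 0 < t →
      |g t - gt t| ≤ |f t - ftilde t| * Real.exp (-(δ₁ * t)) +
        K₀ * Real.exp (-(δ₁ * t)) * ∫ s in (0:ℝ)..t, |c s - ctilde s| := by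
    intro t ht
    have ht' : (0:ℝ) ≤ t := le_of_lt ht
    set I : ℝ := ∫ s in (0:ℝ)..t, |c s - ctilde s| with hI_def
    have hI0 : |φ t - φtilde t| ≤ I := hφdiff t ht'
    have hI0' : (0:ℝ) ≤ I := le_trans (abs_nonneg _) hI0
    have hE : Real.exp (-φ t) ≤ Real.exp (-(δ₁ * t)) := by
      apply Real.exp_le_exp.2; have := hφge t ht'; linarith
    have hmin : Real.exp (-min (φ t) (φtilde t)) ≤ Real.exp (-(δ₁ * t)) := by
      apply Real.exp_le_exp.2
      have h1 := hφge t ht'; have h2 := hφtge t ht'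
      have : δ₁ * t ≤ min (φ t) (φtilde t) := le_min h1 h2
      linarith
    have hsplit : g t - gt t =
        (f t - ftilde t) * Real.exp (-φ t) +
          ftilde t * (Real.exp (-φ t) - Real.exp (-φtilde t)) := by
      simp only [hg_def, hgt_def]; ring
    calc |g t - gt t| ≤ |(f t - ftilde t) * Real.exp (-φ t)| +
          |ftilde t * (Real.exp (-φ t) - Real.exp (-φtilde t))| := by
          rw [hsplit]; exact abs_add_le _ _
      _ = |f t - ftilde t| * Real.exp (-φ t) +
          |ftilde t| * |Real.exp (-φ t) - Real.exp (-φtilde t)| := by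
          rw [abs_mul, abs_mul, abs_of_pos (Real.exp_pos _)]
      _ ≤ |f t - ftilde t| * Real.exp (-(δ₁ * t)) +
          K₀ * (Real.exp (-(δ₁ * t)) * I) := by
          gcongr ?_ + ?_
          · exact mul_le_mul_of_nonneg_left hE (abs_nonneg _)
          · have h1 : |Real.exp (-φ t) - Real.exp (-φtilde t)| ≤
                Real.exp (-min (φ t) (φtilde t)) * |φ t - φtilde t| :=
              aux_exp_lip _ _
            have h2 : Real.exp (-min (φ t) (φtilde t)) * |φ t - φtilde t| ≤
                Real.exp (-(δ₁ * t)) * I :=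
              mul_le_mul hmin hI0 (abs_nonneg _) (Real.exp_pos _).le
            calc |ftilde t| * |Real.exp (-φ t) - Real.exp (-φtilde t)| ≤
                  K₀ * (Real.exp (-min (φ t) (φtilde t)) * |φ t - φtilde t|) :=
                  mul_le_mul (hft t ht') h1 (abs_nonneg _) hK₀
              _ ≤ K₀ * (Real.exp (-(δ₁ * t)) * I) :=
                  mul_le_mul_of_nonneg_left h2 hK₀
      _ = |f t - ftilde t| * Real.exp (-(δ₁ * t)) +
          K₀ * Real.exp (-(δ₁ * t)) * I := by ring
  -- put everything together
  calc ENNReal.ofReal |(∫ t in Set.Ioi (0:ℝ), g t) - ∫ t in Set.Ioi (0:ℝ), gt t|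
      = ENNReal.ofReal |∫ t in Set.Ioi (0:ℝ), (g t - gt t)| := by
        rw [integral_sub hgint hgtint]
    _ ≤ ENNReal.ofReal (∫ t in Set.Ioi (0:ℝ), |g t - gt t|) := by
        apply ENNReal.ofReal_le_ofReal
        simpa [Real.norm_eq_abs] using
          norm_integral_le_integral_norm (μ := volume.restrict (Set.Ioi (0:ℝ)))
            (f := fun t => g t - gt t)
    _ = ∫⁻ t in Set.Ioi (0:ℝ), ENNReal.ofReal |g t - gt t| :=
        ofReal_integral_eq_lintegral_ofReal (hgint.sub hgtint).abs
          (Filter.Eventually.of_forall fun t => abs_nonneg _)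
    _ ≤ ∫⁻ t in Set.Ioi (0:ℝ),
          ENNReal.ofReal
            (|f t - ftilde t| * Real.exp (-(δ₁ * t)) +
              K₀ * Real.exp (-(δ₁ * t)) * ∫ s in (0:ℝ)..t, |c s - ctilde s|) := by
        refine lintegral_mono_ae ((ae_restrict_iff' measurableSet_Ioi).2
          (Filter.Eventually.of_forall fun t ht => ?_))
        exact ENNReal.ofReal_le_ofReal (hpt t ht)
end
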